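/- arXiv:1707.03190 — 3 statements merged into one kernel-verified Lean document; each statement's English description precedes it below -/
import Mathlib

section
/- Let f(x) = (1/n)∑_{i=1}^n f_i(x) where each f_i is convex and L-smooth. Let x̃ and x be fixed points, and let i be drawn uniformly at random from {1,…,n}. Define the variance-reduced gradient estimator g = ∇f_i(x) − ∇f_i(x̃) + ∇f(x̃). Then E[‖g − ∇f(x)‖²] ≤ 2L ( f(x̃) − f(x) + ⟨∇f(x), x − x̃⟩ ). -/
/-!
With `a i = ∇fᵢ x - ∇fᵢ x̃`, the deviation `g i - ∇f x` is `a i` minus the mean of the `a j`,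
so its second moment is at most the mean of `‖a i‖²`. Each `‖a i‖²` is at most `2L` times the
Bregman divergence `D_{fᵢ}(x̃, x)` (co-coercivity, from `D ≥ 0` by convexity and
`D ≤ L/2 ‖·‖²` by smoothness, applied at a gradient step), and these divergences average to
`D_f(x̃, x)`, which is the bracket on the right-hand side.
-/

open RealInnerProductSpace Finset

section
variable {E : Type*} [NormedAddCommGroup E] [InnerProductSpace ℝ E]

theorem Finset.sum_norm_sub_average_sq_le {ι : Type*} (s : Finset ι) (a : ι → E) :
    ∑ i ∈ s, ‖a i - (1 / (#s : ℝ)) • ∑ j ∈ s, a j‖ ^ 2 ≤ ∑ i ∈ s, ‖a i‖ ^ 2 := by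
  set m := (1 / (#s : ℝ)) • ∑ j ∈ s, a j
  have hsum : ∑ j ∈ s, a j = (#s : ℝ) • m := by
    rcases s.eq_empty_or_nonempty with rfl | hs
    · simp
    · rw [smul_smul, mul_one_div_cancel (by exact_mod_cast hs.card_ne_zero), one_smul]
  have hexpand : ∑ i ∈ s, ‖a i - m‖ ^ 2 = ∑ i ∈ s, ‖a i‖ ^ 2 - #s * ‖m‖ ^ 2 := by
    simp only [norm_sub_sq_real, sum_add_distrib, sum_sub_distrib, ← mul_sum, ← sum_inner, hsum,
      real_inner_smul_left, real_inner_self_eq_norm_sq, sum_const, nsmul_eq_mul]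
    ring
  rw [hexpand]
  nlinarith [sq_nonneg ‖m‖, (#s).cast_nonneg (α := ℝ)]

variable [CompleteSpace E]

theorem hasDerivAt_comp_add_smul {h : E → ℝ} {x v : E} {t : ℝ}
    (hd : DifferentiableAt ℝ h (x + t • v)) :
    HasDerivAt (fun s : ℝ => h (x + s • v)) ⟪gradient h (x + t • v), v⟫ t := by
  have hline : HasDerivAt (fun s : ℝ => x + s • v) v t := by
    simpa using ((hasDerivAt_id t).smul_const v).const_add x
  have hcomp := hd.hasFDerivAt.comp_hasDerivAt t hline
  rwa [← inner_gradient_left] at hcomp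

theorem hasGradientAt_const_mul_sum {ι : Type*} (s : Finset ι) (c : ℝ) {h : ι → E → ℝ} {x : E}
    (hd : ∀ i ∈ s, DifferentiableAt ℝ (h i) x) :
    HasGradientAt (fun y => c * ∑ i ∈ s, h i y) (c • ∑ i ∈ s, gradient (h i) x) x := by
  rw [hasGradientAt_iff_hasFDerivAt, map_smul, map_sum]
  refine (HasFDerivAt.fun_sum fun i hi => ?_).const_mul c
  exact hasGradientAt_iff_hasFDerivAt.mp (hd i hi).hasGradientAt

noncomputable def bregmanDiv (h : E → ℝ) (y x : E) : ℝ :=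
  h y - h x - ⟪gradient h x, y - x⟫

theorem bregmanDiv_sub_bregmanDiv_sub_bregmanDiv (h : E → ℝ) (x y z : E) :
    bregmanDiv h z x - bregmanDiv h z y - bregmanDiv h y x =
      ⟪gradient h y - gradient h x, z - y⟫ := by
  have hzx : z - x = (z - y) + (y - x) := by abel
  simp only [bregmanDiv, hzx, inner_add_right, inner_sub_left]
  ring

theorem ConvexOn.bregmanDiv_nonneg {h : E → ℝ} (hc : ConvexOn ℝ Set.univ h) {x : E}
    (hd : DifferentiableAt ℝ h x) (y : E) : 0 ≤ bregmanDiv h y x := by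
  have hline : ConvexOn ℝ Set.univ (fun s : ℝ => h (x + s • (y - x))) := by
    simpa [Function.comp_def, AffineMap.lineMap_apply, add_comm]
      using hc.comp_affineMap (AffineMap.lineMap x y)
  have hslope := hline.le_slope_of_hasDerivAt (Set.mem_univ 0) (Set.mem_univ 1) zero_lt_one
    (hasDerivAt_comp_add_smul (by simpa using hd))
  simp only [slope_def_field, zero_smul, add_zero, one_smul, add_sub_cancel, sub_zero,
    div_one] at hslope
  rw [bregmanDiv]
  linarith

theorem bregmanDiv_le_of_lipschitz_gradient {h : E → ℝ} {L : ℝ} (hd : Differentiable ℝ h)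
    (hlip : ∀ a b, ‖gradient h a - gradient h b‖ ≤ L * ‖a - b‖) (x y : E) :
    bregmanDiv h y x ≤ L / 2 * ‖y - x‖ ^ 2 := by
  set v := y - x
  set c := ⟪gradient h x, v⟫
  have hderiv : ∀ t, HasDerivAt (fun s : ℝ => h (x + s • v)) ⟪gradient h (x + t • v), v⟫ t :=
    fun t => hasDerivAt_comp_add_smul (hd _)
  have hbound : ∀ t : ℝ, HasDerivAt (fun s => h x + s * c + L / 2 * s ^ 2 * ‖v‖ ^ 2)
      (c + L * t * ‖v‖ ^ 2) t := by
    intro t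
    refine ((((hasDerivAt_id t).mul_const c).const_add (h x)).add
      (((hasDerivAt_pow 2 t).const_mul (L / 2)).mul_const (‖v‖ ^ 2))).congr_deriv ?_
    simp only [one_mul, Nat.cast_ofNat]
    ring
  have hslope : ∀ t ∈ Set.Ico (0 : ℝ) 1, ⟪gradient h (x + t • v), v⟫ ≤ c + L * t * ‖v‖ ^ 2 := by
    rintro t ⟨ht, -⟩
    have hgrad : ‖gradient h (x + t • v) - gradient h x‖ ≤ L * t * ‖v‖ := by
      simpa [norm_smul, abs_of_nonneg ht, mul_assoc] using hlip (x + t • v) x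
    have := real_inner_le_norm (gradient h (x + t • v) - gradient h x) v
    rw [inner_sub_left] at this
    nlinarith [norm_nonneg v]
  have key := image_le_of_deriv_right_le_deriv_boundary
    (fun t _ => (hderiv t).continuousAt.continuousWithinAt)
    (fun t _ => (hderiv t).hasDerivWithinAt) (by simp)
    (fun t _ => (hbound t).continuousAt.continuousWithinAt)
    (fun t _ => (hbound t).hasDerivWithinAt) hslope (Set.right_mem_Icc.mpr zero_le_one)
  simp only [one_smul, one_mul, one_pow, v, add_sub_cancel] at key
  rw [bregmanDiv]
  linarith

theorem ConvexOn.norm_sub_gradient_sq_le_bregmanDiv {h : E → ℝ} {L : ℝ} (hL : 0 < L)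
    (hc : ConvexOn ℝ Set.univ h) (hd : Differentiable ℝ h)
    (hlip : ∀ a b, ‖gradient h a - gradient h b‖ ≤ L * ‖a - b‖) (x y : E) :
    ‖gradient h y - gradient h x‖ ^ 2 ≤ 2 * L * bregmanDiv h y x := by
  set G := gradient h y - gradient h x
  -- `z` is a gradient step from `y` for `h - ⟪∇h x, ·⟫`, which is minimal at `x`.
  set z := y - (1 / L) • G
  have hidentity := bregmanDiv_sub_bregmanDiv_sub_bregmanDiv h x y z
  have hlower := hc.bregmanDiv_nonneg (hd x) z
  have hupper := bregmanDiv_le_of_lipschitz_gradient hd hlip y z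
  have hzy : z - y = -((1 / L) • G) := by simp [z]
  rw [hzy, inner_neg_right, real_inner_smul_right, real_inner_self_eq_norm_sq] at hidentity
  rw [hzy, norm_neg, norm_smul, Real.norm_of_nonneg (by positivity), mul_pow] at hupper
  field_simp at hidentity hupper ⊢
  nlinarith

theorem bregmanDiv_const_mul_sum {ι : Type*} (s : Finset ι) (c : ℝ) {h : ι → E → ℝ} {x : E}
    (hd : ∀ i ∈ s, DifferentiableAt ℝ (h i) x) (y : E) :
    bregmanDiv (fun z => c * ∑ i ∈ s, h i z) y x = c * ∑ i ∈ s, bregmanDiv (h i) y x := by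
  simp only [bregmanDiv, (hasGradientAt_const_mul_sum s c hd).gradient, real_inner_smul_left,
    sum_inner, sum_sub_distrib]
  ring

end

theorem svrg_variance_bound_general {d n : ℕ}
    (fi : Fin n → EuclideanSpace ℝ (Fin d) → ℝ) (L : ℝ) (hL : 0 < L)
    (hconv : ∀ i, ConvexOn ℝ Set.univ (fi i))
    (hdiff : ∀ i, Differentiable ℝ (fi i))
    (hlip : ∀ i x y, ‖gradient (fi i) x - gradient (fi i) y‖ ≤ L * ‖x - y‖)
    (f : EuclideanSpace ℝ (Fin d) → ℝ)
    (hf : f = fun x => (1 / (n : ℝ)) * ∑ i, fi i x)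
    (xt x : EuclideanSpace ℝ (Fin d))
    (g : Fin n → EuclideanSpace ℝ (Fin d))
    (hg : ∀ i, g i = gradient (fi i) x - gradient (fi i) xt + gradient f xt) :
    (1 / (n : ℝ)) * ∑ i, ‖g i - gradient f x‖ ^ 2 ≤
      2 * L * (f xt - f x + ⟪gradient f x, x - xt⟫) := by
  have hgrad z : gradient f z = (1 / (n : ℝ)) • ∑ i, gradient (fi i) z := by
    rw [hf]; exact (hasGradientAt_const_mul_sum _ _ fun i _ => hdiff i z).gradient
  set a := fun i => gradient (fi i) x - gradient (fi i) xt
  have hdev i : g i - gradient f x = a i - (1 / (n : ℝ)) • ∑ j, a j := by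
    simp only [hg, hgrad, a, sum_sub_distrib, smul_sub]
    abel
  have hrhs : f xt - f x + ⟪gradient f x, x - xt⟫ = bregmanDiv f xt x := by
    rw [bregmanDiv, ← neg_sub xt x, inner_neg_right]
    ring
  calc (1 / (n : ℝ)) * ∑ i, ‖g i - gradient f x‖ ^ 2
      = (1 / (n : ℝ)) * ∑ i, ‖a i - (1 / (n : ℝ)) • ∑ j, a j‖ ^ 2 := by simp only [hdev]
    _ ≤ (1 / (n : ℝ)) * ∑ i, ‖a i‖ ^ 2 := by
        gcongr (1 / (n : ℝ)) * ?_
        simpa using Finset.sum_norm_sub_average_sq_le univ a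
    _ ≤ (1 / (n : ℝ)) * ∑ i, 2 * L * bregmanDiv (fi i) xt x := by
        gcongr with i
        rw [norm_sub_rev]
        exact (hconv i).norm_sub_gradient_sq_le_bregmanDiv hL (hdiff i) (hlip i) x xt
    _ = 2 * L * (f xt - f x + ⟪gradient f x, x - xt⟫) := by
        rw [hrhs, hf, bregmanDiv_const_mul_sum _ _ fun i _ => hdiff i x, ← mul_sum]
        ring

theorem svrg_variance_bound {d n : ℕ} (hn : 0 < n)
    (fi : Fin n → EuclideanSpace ℝ (Fin d) → ℝ) (L : ℝ) (hL : 0 < L)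
    (hconv : ∀ i, ConvexOn ℝ Set.univ (fi i))
    (hdiff : ∀ i, Differentiable ℝ (fi i))
    (hlip : ∀ i x y, ‖gradient (fi i) x - gradient (fi i) y‖ ≤ L * ‖x - y‖)
    (f : EuclideanSpace ℝ (Fin d) → ℝ)
    (hf : f = fun x => (1 / (n : ℝ)) * ∑ i, fi i x)
    (xt x : EuclideanSpace ℝ (Fin d))
    (g : Fin n → EuclideanSpace ℝ (Fin d))
    (hg : ∀ i, g i = gradient (fi i) x - gradient (fi i) xt + gradient f xt) :
    (1 / (n : ℝ)) * ∑ i, ‖g i - gradient f x‖ ^ 2 ≤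
      2 * L * (f xt - f x + ⟪gradient f x, x - xt⟫) :=
  svrg_variance_bound_general fi L hL hconv hdiff hlip f hf xt x g hg
end

section
/- Let θ_0 ∈ (0,1] and θ_s = (√(θ_{s−1}⁴ + 4θ_{s−1}²) − θ_{s−1}²)/2. Then θ_s ≤ 2/(s+2) for all s ≥ 0. -/
theorem momentum_weight_decay (θ : ℕ → ℝ) (h0 : 0 < θ 0) (h0' : θ 0 ≤ 1)
    (hrec : ∀ s : ℕ,
      θ (s + 1) = (Real.sqrt ((θ s) ^ 4 + 4 * (θ s) ^ 2) - (θ s) ^ 2) / 2) :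
    ∀ s : ℕ, θ s ≤ 2 / (s + 2 : ℝ) := by
  have hpos : ∀ s, 0 < θ s := by
    intro s
    induction s with
    | zero => exact h0
    | succ n ih =>
      rw [hrec n]
      have h2 : (θ n) ^ 2 < Real.sqrt ((θ n) ^ 4 + 4 * (θ n) ^ 2) := by
        rw [show (θ n) ^ 4 + 4 * (θ n) ^ 2
            = ((θ n) ^ 2) ^ 2 + 4 * (θ n) ^ 2 by ring]
        nlinarith [Real.sq_sqrt (by positivity : (0:ℝ) ≤ ((θ n) ^ 2) ^ 2 + 4 * (θ n) ^ 2),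
          Real.sqrt_nonneg (((θ n) ^ 2) ^ 2 + 4 * (θ n) ^ 2), sq_nonneg (θ n), ih]
      linarith
  have hquad : ∀ s, (θ (s+1)) ^ 2 + (θ s) ^ 2 * θ (s+1) - (θ s) ^ 2 = 0 := by
    intro s
    have h1 : (0:ℝ) ≤ (θ s) ^ 4 + 4 * (θ s) ^ 2 := by positivity
    have h2 : (Real.sqrt ((θ s) ^ 4 + 4 * (θ s) ^ 2)) ^ 2
        = (θ s) ^ 4 + 4 * (θ s) ^ 2 := Real.sq_sqrt h1
    have ht : Real.sqrt ((θ s) ^ 4 + 4 * (θ s) ^ 2) = 2 * θ (s+1) + (θ s) ^ 2 := by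
      have := hrec s; linarith
    rw [ht] at h2
    linear_combination h2 / 4
  intro s
  induction s with
  | zero => norm_num; linarith
  | succ n ih =>
    set a := θ n with ha
    set b := θ (n+1) with hb
    have hq := hquad n
    have hpa := hpos n
    have hpb := hpos (n+1)
    have hn : (0:ℝ) ≤ (n:ℝ) := Nat.cast_nonneg n
    have h2 : (0:ℝ) < (n:ℝ) + 2 := by linarith
    have h3 : (0:ℝ) < (n:ℝ) + 3 := by linarith
    have hA : a * ((n:ℝ) + 2) ≤ 2 := by
      have := (le_div_iff₀ h2).mp ih
      linarith
    rw [← ha, ← hb] at hq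
    have hb1 : b < 1 := by nlinarith
    have haa : a ^ 2 * ((n:ℝ) + 2) ^ 2 ≤ 4 := by nlinarith [mul_pos hpa h2]
    have key : b ^ 2 * ((n:ℝ) + 2) ^ 2 ≤ 4 * (1 - b) := by
      nlinarith [mul_nonneg (by linarith : (0:ℝ) ≤ 4 - a ^ 2 * ((n:ℝ) + 2) ^ 2)
        (by linarith : (0:ℝ) ≤ 1 - b), mul_pos hpa h2]
    have : b * ((n:ℝ) + 3) ≤ 2 := by
      nlinarith [sq_nonneg (b * ((n:ℝ) + 3) - 2), mul_pos hpb h3]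
    have hfin : b ≤ 2 / ((n:ℝ) + 3) := (le_div_iff₀ h3).mpr this
    push_cast
    rw [show (n:ℝ) + 1 + 2 = (n:ℝ) + 3 by ring]
    exact hfin
end

section
/- Let θ_0 ∈ (0,1] and suppose (1−θ_s)/θ_s² = 1/θ_{s−1}² with 0 < θ_s < 1 for all s ≥ 1. Then for all s ≥ 1, 0 ≤ 1/θ_s − 1/θ_{s−1} < 1. -/
theorem inv_momentum_weight_increment (θ : ℕ → ℝ) (h0 : 0 < θ 0) (h0' : θ 0 ≤ 1)
    (hpos : ∀ s : ℕ, 1 ≤ s → 0 < θ s ∧ θ s < 1)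
    (hrec : ∀ s : ℕ, 1 ≤ s → (1 - θ s) / (θ s) ^ 2 = 1 / (θ (s - 1)) ^ 2) :
    ∀ s : ℕ, 1 ≤ s → 0 ≤ 1 / θ s - 1 / θ (s - 1) ∧ 1 / θ s - 1 / θ (s - 1) < 1 := by
  intro s hs
  obtain ⟨hp, hl⟩ := hpos s hs
  have hp' : 0 < θ (s - 1) := by
    rcases Nat.lt_or_ge s 2 with h | h
    · interval_cases s
      simpa using h0
    · exact (hpos (s - 1) (by omega)).1
  have key := hrec s hs
  -- key identity: (1/θ s)^2 - (1/θ (s-1))^2 = 1/θ s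
  have hkey : (1 / θ s) ^ 2 - (1 / θ (s - 1)) ^ 2 = 1 / θ s := by
    field_simp at key ⊢
    nlinarith [key, sq_nonneg (θ s), sq_nonneg (θ (s - 1))]
  set a := 1 / θ (s - 1) with ha
  set b := 1 / θ s with hb
  have hapos : 0 < a := by positivity
  have hbpos : 0 < b := by positivity
  constructor
  · nlinarith [mul_pos hapos hbpos]
  · nlinarith [mul_pos hapos hbpos]
end
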